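/- Let W be a finite-dimensional complex vector space and C a cubic on W. Define φ : ℂ × W → V by φ(z,w) = ((1/6)z³, z²·w, z·(C w w), (1/3)·(C w w)(w)), and for each (z,w) define the linear map L_{(z,w)} : ℂ × W → V by L_{(z,w)}(a,u) = ((1/2)z²a, (2za)·w + z²·u, a·(C w w) + (2z)·(C w u), (C w w)(u)). Then: (1) L_{(z,w)} is the first-order term of φ at (z,w): for all (a,u) there is a function ρ : ℂ → V with φ(z+εa, w+εu) = φ(z,w) + ε·L_{(z,w)}(a,u) + ε²·ρ(ε) for all ε ∈ ℂ; (2) the image of L_{(z,w)} is isotropic for Ω: Ω(L_{(z,w)}(a,u), L_{(z,w)}(b,v)) = 0 for all (a,u), (b,v) ∈ ℂ × W; (3) φ(z,w) lies in the image of L_{(z,w)}, namely L_{(z,w)}(z,w) = 3·φ(z,w). (This is the Legendrian property of the image variety of φ with respect to the symplectic form Ω.) -/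
import Mathlib


noncomputable section

/-- `V = ℂ × W × W* × ℂ`. -/
abbrev VV (W : Type*) [AddCommGroup W] [Module ℂ W] :=
  ℂ × W × Module.Dual ℂ W × ℂ

/-- The symplectic form `Ω((α,r,r*,α*),(β,s,s*,β*)) = 6(αβ* − βα*) − (s*(r) − r*(s))`. -/
def OmegaForm {W : Type*} [AddCommGroup W] [Module ℂ W] (u v : VV W) : ℂ :=
  6 * (u.1 * v.2.2.2 - v.1 * u.2.2.2) - (v.2.2.1 u.2.1 - u.2.2.1 v.2.1)

/-- The parametrization `φ(z,w) = ((1/6)z³, z²·w, z·C(w²), (1/3)·C(w³))`. -/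
def phiMap {W : Type*} [AddCommGroup W] [Module ℂ W]
    (C : W →ₗ[ℂ] W →ₗ[ℂ] Module.Dual ℂ W) (p : ℂ × W) : VV W :=
  ((1 / 6) * p.1 ^ 3, (p.1 ^ 2) • p.2, p.1 • C p.2 p.2, (1 / 3) * (C p.2 p.2) p.2)

/-- The first-order term of `φ` at `(z,w)`:
`L_{(z,w)}(a,u) = ((1/2)z²a, 2za·w + z²·u, a·C(w²) + 2z·C(wu), C(w²)(u))`. -/
def Lmap {W : Type*} [AddCommGroup W] [Module ℂ W]
    (C : W →ₗ[ℂ] W →ₗ[ℂ] Module.Dual ℂ W) (p q : ℂ × W) : VV W :=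
  ((1 / 2) * p.1 ^ 2 * q.1,
    (2 * p.1 * q.1) • p.2 + (p.1 ^ 2) • q.2,
    q.1 • C p.2 p.2 + (2 * p.1) • C p.2 q.2,
    (C p.2 p.2) q.2)

/-- `L_{(z,w)}` is the differential of `φ` at `(z,w)`, its image is `Ω`-isotropic,
and `φ(z,w)` lies in the image of `L_{(z,w)}`: the Legendrian property of the image of `φ`. -/
theorem stmt3 {W : Type*} [AddCommGroup W] [Module ℂ W] [FiniteDimensional ℂ W]
    (C : W →ₗ[ℂ] W →ₗ[ℂ] Module.Dual ℂ W)
    (hC : ∀ r s t : W, C r s t = C s r t ∧ C r s t = C r t s) :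
    (∀ (z : ℂ) (w : W) (a : ℂ) (u : W), ∃ ρ : ℂ → VV W, ∀ ε : ℂ,
      phiMap C (z + ε * a, w + ε • u)
        = phiMap C (z, w) + ε • Lmap C (z, w) (a, u) + ε ^ 2 • ρ ε) ∧
    (∀ (z : ℂ) (w : W) (a : ℂ) (u : W) (b : ℂ) (v : W),
      OmegaForm (Lmap C (z, w) (a, u)) (Lmap C (z, w) (b, v)) = 0) ∧
    (∀ (z : ℂ) (w : W), Lmap C (z, w) (z, w) = (3 : ℂ) • phiMap C (z, w)) := by
  refine ⟨?_, ?_, ?_⟩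
  · intro z w a u
    refine ⟨fun ε => ((1/2)*z*a^2 + (1/6)*a^3*ε,
      (a^2) • w + (2*z*a) • u + (ε*a^2) • u,
      a • (C w u + C u w) + z • C u u + (ε*a) • C u u,
      (1/3) * (C u u w + C w u u + C u w u + ε * (C u u u))), ?_⟩
    intro ε
    have hsym : C u w = C w u := LinearMap.ext fun t => (hC u w t).1
    have hwu : C (w + ε • u) (w + ε • u)
        = C w w + ε • (C w u + C u w) + (ε^2) • C u u := by
      simp only [map_add, map_smul, LinearMap.add_apply, LinearMap.smul_apply]
      module
    simp only [phiMap, Lmap, Prod.mk.injEq, Prod.ext_iff, Prod.fst_add, Prod.snd_add,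
      Prod.smul_fst, Prod.smul_snd, smul_eq_mul, hwu, hsym]
    refine ⟨by ring, ?_, ?_, ?_⟩
    · module
    · module
    · simp only [LinearMap.add_apply, LinearMap.smul_apply, map_add, map_smul,
        smul_eq_mul, hsym]
      rw [(hC w u w).2, (hC w u u).2]
      ring
  · intro z w a u b v
    have h1 : C w v w = C w w v := (hC w v w).2
    have h2 : C w u w = C w w u := (hC w u w).2
    have h3 : C w v u = C w u v := (hC w v u).2
    simp only [OmegaForm, Lmap, map_add, map_smul, LinearMap.add_apply,
      LinearMap.smul_apply, smul_eq_mul]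
    rw [h1, h2, h3]; ring
  · intro z w
    simp only [Lmap, phiMap, Prod.ext_iff, Prod.smul_fst, Prod.smul_snd, smul_eq_mul]
    refine ⟨by ring, by module, by module, by ring⟩
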